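/- Let p be an odd prime, let D_p = ⟨a,b | a^p = b^2 = 1, bab = a^{-1}⟩, and let S = S₁ ∪ S₂ ⊆ D_p∖{1} with S = S^{-1}, where S₁ ⊆ ⟨a⟩ and S₂ ⊆ b⟨a⟩. Then the Cayley graph X(D_p,S) is integral if and only if S₁ is a union of atoms of B(⟨a⟩) (i.e., S₁ ∈ {∅, ⟨a⟩∖{1}, ⟨a⟩∖{1} treated as a union of atoms}) and S₂ is one of: b⟨a⟩∖{ba^k} for some 0 ≤ k ≤ p−1, the full coset b⟨a⟩, a singleton {ba^k} for some 0 ≤ k ≤ p−1, or the empty set. -/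

import Mathlib

open DihedralGroup Polynomial

/-- The degree-2 irreducible character `χ_h` of the dihedral group `D_n`:
`χ_h(a^k) = 2cos(2khπ/n)` and `χ_h(ba^k) = 0`. -/
noncomputable def chi (n h : ℕ) : DihedralGroup n → ℝ
  | .r k => 2 * Real.cos (2 * k.val * h * Real.pi / n)
  | .sr _ => 0

/-- `χ(A) = Σ_{x ∈ A} χ(x)`. -/
noncomputable def chiSum (n h : ℕ) (A : Set (DihedralGroup n)) : ℝ :=
  ∑ᶠ x ∈ A, chi n h x

/-- `χ(A²) = Σ_{x,y ∈ A} χ(xy)`, over ordered pairs. -/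
noncomputable def chiSum2 (n h : ℕ) (A : Set (DihedralGroup n)) : ℝ :=
  ∑ᶠ x ∈ A, ∑ᶠ y ∈ A, chi n h (x * y)

/-- The Cayley graph `X(G,S)`: vertices `G`, with `x,y` adjacent iff `x⁻¹y ∈ S`
(for `S` inverse-closed and not containing `1`). -/
def cayleyGraph {G : Type*} [Group G] (S : Set G) : SimpleGraph G :=
  SimpleGraph.fromRel (fun x y => x⁻¹ * y ∈ S)

open scoped Classical in
/-- The adjacency matrix of a graph, over `ℂ`. -/
noncomputable def adjMat {V : Type*} [Fintype V] (G : SimpleGraph V) : Matrix V V ℂ :=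
  Matrix.of fun x y => if G.Adj x y then 1 else 0

/-- A graph is integral if every eigenvalue of its adjacency matrix is an integer. -/
def IsIntegralGraph {V : Type*} [Fintype V] [DecidableEq V] (G : SimpleGraph V) : Prop :=
  ∀ μ ∈ spectrum ℂ (adjMat G), ∃ z : ℤ, μ = (z : ℂ)

/-- The cyclic subgroup `⟨a⟩` of `D_n`, as a set. -/
def rSet (n : ℕ) : Set (DihedralGroup n) := {x | ∃ k, x = .r k}

/-- The coset `b⟨a⟩` of `D_n`, as a set. -/
def srSet (n : ℕ) : Set (DihedralGroup n) := {x | ∃ k, x = .sr k}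

/-- `S` belongs to the Boolean algebra `B(⟨a⟩)`, i.e. `S ⊆ ⟨a⟩` is a union of atoms
`[a^l] = {a^k : gcd(k,n) = gcd(l,n)}`: membership in `S` is constant on each atom. -/
def InBooleanAlgebra (n : ℕ) (S : Set (DihedralGroup n)) : Prop :=
  S ⊆ rSet n ∧ ∀ k l : ZMod n, Nat.gcd k.val n = Nat.gcd l.val n →
    (DihedralGroup.r k ∈ S ↔ DihedralGroup.r l ∈ S)

/-- The multiplicity of `x` in the multiset `S² = {s₁s₂ : (s₁,s₂) ∈ S × S}` (ordered pairs). -/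
noncomputable def sqMult {n : ℕ} (S : Set (DihedralGroup n)) (x : DihedralGroup n) : ℕ :=
  Nat.card {p : DihedralGroup n × DihedralGroup n // p.1 ∈ S ∧ p.2 ∈ S ∧ p.1 * p.2 = x}

/-- The irreducible character `φ_h` of the cyclic group `⟨a⟩` of order `n`:
`φ_h(a^k) = e^{2πihk/n}`. -/
noncomputable def phi (n h : ℕ) (k : ZMod n) : ℂ :=
  Complex.exp (2 * Real.pi * Complex.I * h * k.val / n)

/-!
The adjacency matrix of `X(D_n, S)` is left convolution by the indicator of `S`.

If `S ∩ ⟨a⟩` is `∅` or `⟨a⟩ ∖ {1}` and `S ∩ b⟨a⟩` has one of the four shapes, this indicator is an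
integer combination of the trivial character, the sign character, `δ_{ba^c}` and `δ_1`. Convolution
by a linear character is a multiple of an idempotent on which every convolution acts by a scalar, and
`δ_{ba^c}` is an involution, so the adjacency matrix is killed by a product of four linear factors
with integer roots.

Conversely, for each `h` the vectors `a^j ↦ c ζ^{hj}, ba^j ↦ d ζ^{-hj}` span an invariant plane on
which the matrix acts by `[[α_h, conj β_h], [β_h, α_h]]`, where `α_h`, `β_h` are the character sums
of the rotation and reflection parts of `S`; hence `α_h ± |β_h|` are eigenvalues. Integrality at
`h = 1` makes `α_1` and `|β_1|²` rational, and since `p` is prime the Galois conjugations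
`ζ ↦ ζ^h` make `α_h` and `|β_h|²` constant on `h ≠ 0`. The moment identities `∑_h α_h = 0` and
`∑_h |α_h|² = p |S ∩ ⟨a⟩|` then force `|S ∩ ⟨a⟩| ∈ {0, p - 1}`. For `T = S ∩ b⟨a⟩`, writing
`|β_h|² = m² / 4`, the identity `∑_h |β_h|² = p |T|` becomes `(2|T| - p)² + (p - 1) m² = p²`,
whose only solutions have `|T| ∈ {0, 1, p - 1, p}`.
-/

open Matrix Finset
open ZMod (stdAddChar)

section CayleyGraph

variable {G : Type*} [Group G]

theorem cayleyGraph_adj {S : Set G} (h1 : (1 : G) ∉ S) (hSinv : S⁻¹ = S) (x y : G) :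
    (cayleyGraph S).Adj x y ↔ x⁻¹ * y ∈ S := by
  refine ⟨?_, fun h => ⟨?_, Or.inl h⟩⟩
  · rintro ⟨-, h | h⟩
    · exact h
    · rw [← hSinv, Set.mem_inv]
      simpa using h
  · rintro rfl
    exact h1 (by simpa using h)

def convMatrix : (G → ℂ) →ₗ[ℂ] Matrix G G ℂ where
  toFun f := Matrix.of fun x y => f (x⁻¹ * y)
  map_add' _ _ := rfl
  map_smul' _ _ := rfl

@[simp]
theorem convMatrix_apply (f : G → ℂ) (x y : G) : convMatrix f x y = f (x⁻¹ * y) := rfl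

theorem convMatrix_single_one [DecidableEq G] : convMatrix (Pi.single (1 : G) 1) = 1 := by
  ext x y
  simp [Matrix.one_apply, Pi.single_apply, inv_mul_eq_one]

variable [Fintype G]

theorem adjMat_cayleyGraph {S : Set G} (h1 : (1 : G) ∉ S) (hSinv : S⁻¹ = S) :
    adjMat (cayleyGraph S) = convMatrix (S.indicator 1) := by
  ext x y
  by_cases h : x⁻¹ * y ∈ S <;> simp [adjMat, h, cayleyGraph_adj h1 hSinv]

theorem convMatrix_mulVec (f v : G → ℂ) (x : G) :
    (convMatrix f *ᵥ v) x = ∑ g, f g * v (x * g) := by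
  simp only [mulVec, dotProduct, convMatrix_apply]
  exact (Fintype.sum_equiv (Equiv.mulLeft x) _ _ fun g => by simp).symm

theorem convMatrix_mul (f f' : G → ℂ) :
    convMatrix f * convMatrix f' = convMatrix fun z => ∑ g, f g * f' (g⁻¹ * z) := by
  ext x y
  simp only [mul_apply, convMatrix_apply]
  exact (Fintype.sum_equiv (Equiv.mulLeft x) _ _ fun g => by simp [mul_assoc]).symm

theorem convMatrix_mul_convMatrix_monoidHom (f : G → ℂ) (χ : G →* ℂ) :
    convMatrix f * convMatrix χ = (∑ g, f g * χ g⁻¹) • convMatrix χ := by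
  rw [convMatrix_mul, ← map_smul]
  congr 1
  ext z
  simp [sum_mul, mul_assoc]

theorem convMatrix_monoidHom_mul_convMatrix (χ : G →* ℂ) (f : G → ℂ) :
    convMatrix χ * convMatrix f = (∑ g, f g * χ g⁻¹) • convMatrix χ := by
  rw [convMatrix_mul, ← map_smul]
  congr 1
  ext z
  rw [Pi.smul_apply, smul_eq_mul, sum_mul]
  refine (Fintype.sum_equiv ((Equiv.inv G).trans (Equiv.mulLeft z)) _ _ fun g => ?_).symm
  simp only [Equiv.trans_apply, Equiv.inv_apply, Equiv.coe_mulLeft, map_mul,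
    show (z * g⁻¹)⁻¹ * z = g by group]
  ring

theorem convMatrix_single_mul_single [DecidableEq G] (g h : G) :
    convMatrix (Pi.single g 1) * convMatrix (Pi.single h 1) = convMatrix (Pi.single (g * h) 1) := by
  rw [convMatrix_mul]
  congr 1
  ext z
  simp only [Pi.single_apply, boole_mul, sum_ite_eq', mem_univ, if_true,
    inv_mul_eq_iff_eq_mul]

end CayleyGraph

theorem Matrix.mem_spectrum_of_mulVec_eq_smul {n K : Type*} [Fintype n] [DecidableEq n] [Field K]
    {A : Matrix n n K} {v : n → K} {μ : K} (hv : v ≠ 0) (h : A *ᵥ v = μ • v) :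
    μ ∈ spectrum K A := by
  rw [← Matrix.spectrum_toLin', ← Module.End.hasEigenvalue_iff_mem_spectrum]
  exact Module.End.hasEigenvalue_of_hasEigenvector
    ⟨Module.End.mem_eigenspace_iff.2 (by simpa using h), hv⟩

theorem spectrum.mem_of_list_prod_sub_algebraMap_eq_zero {K A : Type*} [Field K] [Ring A]
    [Algebra K A] [Nontrivial A] {a : A} (l : List K)
    (hl : (l.map fun c => a - algebraMap K A c).prod = 0) {μ : K} (hμ : μ ∈ spectrum K a) :
    μ ∈ l := by
  have hq : aeval a (l.map fun c => X - C c).prod = 0 := by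
    simpa [map_list_prod, Function.comp_def] using hl
  have := spectrum.subset_polynomial_aeval a (l.map fun c => X - C c).prod ⟨μ, hμ, rfl⟩
  rw [hq, spectrum.zero_eq, Set.mem_singleton_iff] at this
  simpa [eval_list_prod, List.prod_eq_zero_iff, sub_eq_zero] using this

theorem list_prod_sub_algebraMap_eq_zero {K A : Type*} [CommRing K] [Ring A] [Algebra K A]
    {J E R : A} {m : K} (hJJ : J * J = m • J) (hEE : E * E = m • E) (hJE : J * E = 0)
    (hEJ : E * J = 0) (hRJ : R * J = J) (hJR : J * R = J) (hRE : R * E = -E) (hER : E * R = -E)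
    (hRR : R * R = 1) {α β s t : K} {N : A} (hN : N = α • J + β • E + s • R + algebraMap K A t) :
    ([m * α + s + t, m * β - s + t, s + t, -s + t].map fun c => N - algebraMap K A c).prod = 0 := by
  simp only [Algebra.algebraMap_eq_smul_one] at hN ⊢
  have hJ : (N - (m * α + s + t) • 1) * J = 0 := by
    simp only [hN, add_mul, sub_mul, smul_mul_assoc, one_mul, hJJ, hEJ, hRJ]
    module
  have hE : (N - (m * β - s + t) • 1) * E = 0 := by
    simp only [hN, add_mul, sub_mul, smul_mul_assoc, one_mul, hJE, hEE, hRE]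
    module
  -- `R² = 1` is what makes `(N - t)² - s²` fall back into the span of `J` and `E`.
  have hsq : (N - (s + t) • (1 : A)) * (N - (-s + t) • 1)
      = (m * α ^ 2 + 2 * α * s) • J + (m * β ^ 2 - 2 * β * s) • E := by
    simp only [hN, add_mul, mul_add, sub_mul, mul_sub, smul_mul_assoc, mul_smul_comm, one_mul,
      mul_one, hJJ, hEE, hJE, hEJ, hRJ, hJR, hRE, hER, hRR, smul_smul]
    module
  have hcomm : ∀ a b : K, (N - a • (1 : A)) * (N - b • 1) = (N - b • 1) * (N - a • 1) := by
    intro a b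
    simp only [sub_mul, mul_sub, smul_mul_assoc, mul_smul_comm, one_mul, mul_one]
    module
  simp only [List.map_cons, List.map_nil, List.prod_cons, List.prod_nil, mul_one]
  rw [hsq, mul_add, mul_add, mul_smul_comm, mul_smul_comm, mul_smul_comm, mul_smul_comm,
    ← mul_assoc, hcomm, mul_assoc _ _ J, hJ, hE]
  simp

namespace DihedralGroup

variable {n : ℕ}

theorem sum_univ [NeZero n] {M : Type*} [AddCommMonoid M] (f : DihedralGroup n → M) :
    ∑ x, f x = ∑ j, f (r j) + ∑ j, f (sr j) := by
  rw [← equivSum.symm.sum_comp, Fintype.sum_sum_type]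
  rfl

@[simp] theorem r_eq_one_iff {k : ZMod n} : r k = 1 ↔ k = 0 := by
  rw [← r_zero, r.injEq]

@[simp] theorem sr_ne_one (k : ZMod n) : sr k ≠ 1 := by
  rw [← r_zero]
  exact fun h => by cases h

def sign : DihedralGroup n →* ℂ where
  toFun
    | r _ => 1
    | sr _ => -1
  map_one' := rfl
  map_mul' := by rintro (a | a) (b | b) <;> simp [r_mul_r, r_mul_sr, sr_mul_r, sr_mul_sr]

@[simp] theorem sign_r (k : ZMod n) : sign (r k) = 1 := rfl

@[simp] theorem sign_sr (k : ZMod n) : sign (sr k) = -1 := rfl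

theorem sign_inv (g : DihedralGroup n) : sign g⁻¹ = sign g := by
  cases g <;> simp [inv_r, inv_sr]

@[simp] theorem sign_mul_self (g : DihedralGroup n) : sign g * sign g = 1 := by
  cases g <;> simp

theorem sum_sign [NeZero n] : ∑ g : DihedralGroup n, sign g = 0 := by
  simp [sum_univ]

end DihedralGroup

section Sufficiency

variable {n : ℕ} [NeZero n]

theorem list_prod_convMatrix_sub_algebraMap_eq_zero (α β s t : ℂ) (c : ZMod n) :
    ([2 * n * α + s + t, 2 * n * β - s + t, s + t, -s + t].map fun μ =>
      convMatrix (α • ⇑(1 : DihedralGroup n →* ℂ) + β • ⇑sign + s • Pi.single (sr c) 1 +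
        t • Pi.single 1 1) - algebraMap ℂ _ μ).prod = 0 := by
  have hcard : ∑ _g : DihedralGroup n, (1 : ℂ) = 2 * n := by
    simp [DihedralGroup.card]
  refine list_prod_sub_algebraMap_eq_zero (J := convMatrix ⇑(1 : DihedralGroup n →* ℂ))
    (E := convMatrix ⇑sign) (R := convMatrix (Pi.single (sr c) 1)) ?_ ?_ ?_ ?_ ?_ ?_ ?_ ?_ ?_
    (by simp [convMatrix_single_one, Algebra.algebraMap_eq_smul_one])
  · rw [convMatrix_mul_convMatrix_monoidHom]; simp [hcard]
  · rw [convMatrix_mul_convMatrix_monoidHom]; simp [sign_inv, hcard]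
  · rw [convMatrix_mul_convMatrix_monoidHom]; simp [sign_inv, sum_sign]
  · rw [convMatrix_mul_convMatrix_monoidHom]; simp [sum_sign]
  · rw [convMatrix_mul_convMatrix_monoidHom]; simp
  · rw [convMatrix_monoidHom_mul_convMatrix]; simp
  · rw [convMatrix_mul_convMatrix_monoidHom]; simp [sign_inv, Pi.single_apply]
  · rw [convMatrix_monoidHom_mul_convMatrix]; simp [sign_inv, Pi.single_apply]
  · rw [convMatrix_single_mul_single, sr_mul_self, convMatrix_single_one]

theorem isIntegralGraph_cayleyGraph_of_indicator {S : Set (DihedralGroup n)}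
    (h1 : (1 : DihedralGroup n) ∉ S) (hSinv : S⁻¹ = S) (a w s : ℤ) (c : ZMod n)
    (hr : ∀ k ≠ 0, (S.indicator 1 (r k) : ℂ) = a)
    (hsr : ∀ k, (S.indicator 1 (sr k) : ℂ) = w + s * (Pi.single c 1 : ZMod n → ℂ) k) :
    IsIntegralGraph (cayleyGraph S) := by
  have hS : (S.indicator 1 : DihedralGroup n → ℂ) = ((a + w) / 2 : ℂ) • ⇑(1 : DihedralGroup n →* ℂ)
      + ((a - w) / 2 : ℂ) • ⇑sign + (s : ℂ) • Pi.single (sr c) 1 + (-a : ℂ) • Pi.single 1 1 := by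
    funext g
    rcases g with k | k
    · by_cases hk : k = 0
      · subst hk
        simp [h1]
        ring
      · simp [hr k hk, hk]
        ring
    · simp [hsr k, Pi.single_apply]
      ring
  intro μ hμ
  rw [adjMat_cayleyGraph h1 hSinv, hS] at hμ
  have hroots := spectrum.mem_of_list_prod_sub_algebraMap_eq_zero _
    (list_prod_convMatrix_sub_algebraMap_eq_zero _ _ _ _ c) hμ
  simp only [List.mem_cons, List.not_mem_nil, or_false] at hroots
  rcases hroots with rfl | rfl | rfl | rfl
  exacts [⟨n * (a + w) + s - a, by push_cast; ring⟩, ⟨n * (a - w) - s - a, by push_cast; ring⟩,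
    ⟨s - a, by push_cast; ring⟩, ⟨-s - a, by push_cast; ring⟩]

end Sufficiency

section Diophantine

variable {p : ℕ}

theorem eq_of_sq_add_mul_sq_eq_sq_of_dvd (hp : p.Prime) {u m : ℤ} (hm : 0 ≤ m)
    (hdvd : (p : ℤ) ∣ u - m) (h : u ^ 2 + (p - 1) * m ^ 2 = p ^ 2) :
    u = p ∨ u = -p ∨ u = 2 - p := by
  have hp2 : (2 : ℤ) ≤ p := by exact_mod_cast hp.two_le
  obtain ⟨hu₁, hu₂⟩ := abs_le_of_sq_le_sq' (show u ^ 2 ≤ (p : ℤ) ^ 2 by nlinarith) (by omega)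
  have hmp : m ≤ p := by nlinarith
  obtain ⟨k, hk⟩ := hdvd
  have hk₁ : -2 ≤ k := by nlinarith
  have hk₂ : k ≤ 1 := by nlinarith
  interval_cases k
  · omega
  · obtain rfl : u = m - p := by linarith
    have hm2 : m * (m - 2) = 0 := by
      have : (p : ℤ) * (m * (m - 2)) = 0 := by linear_combination h
      exact (mul_eq_zero.mp this).resolve_left (by omega)
    rcases mul_eq_zero.mp hm2 with h0 | h2 <;> omega
  · obtain rfl : m = u := by linarith
    have hsq : m ^ 2 = p := by
      have : (p : ℤ) * (m ^ 2 - p) = 0 := by linear_combination h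
      linarith [(mul_eq_zero.mp this).resolve_left (by omega)]
    exact absurd ⟨m, by rw [← hsq, sq]⟩ (Nat.prime_iff_prime_int.mp hp).not_isSquare
  · omega

theorem eq_of_sq_add_mul_sq_eq_sq (hp : p.Prime) {u m : ℤ} (h : u ^ 2 + (p - 1) * m ^ 2 = p ^ 2) :
    u = p ∨ u = -p ∨ u = p - 2 ∨ u = 2 - p := by
  rw [← sq_abs m] at h
  have hdvd : (p : ℤ) ∣ (u - |m|) * (u + |m|) := ⟨p - |m| ^ 2, by linear_combination h⟩
  rcases (Nat.prime_iff_prime_int.mp hp).dvd_or_dvd hdvd with hd | hd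
  · have := eq_of_sq_add_mul_sq_eq_sq_of_dvd hp (abs_nonneg m) hd h
    omega
  · have := eq_of_sq_add_mul_sq_eq_sq_of_dvd hp (abs_nonneg m) (u := -u)
      (by rw [show -u - |m| = -(u + |m|) by ring]; exact hd.neg_right) (by linear_combination h)
    omega

end Diophantine

section CharSum

variable {n : ℕ} [NeZero n]

noncomputable def charSum (T : Finset (ZMod n)) (h : ZMod n) : ℂ := ∑ k ∈ T, stdAddChar (h * k)

theorem charSum_zero (T : Finset (ZMod n)) : charSum T 0 = #T := by
  simp [charSum]

theorem charSum_neg (T : Finset (ZMod n)) (h : ZMod n) :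
    charSum T (-h) = starRingEnd ℂ (charSum T h) := by
  simp [charSum, map_sum, ← AddChar.map_neg_eq_conj]

theorem sum_charSum (T : Finset (ZMod n)) :
    ∑ h, charSum T h = if (0 : ZMod n) ∈ T then (n : ℂ) else 0 := by
  simp_rw [charSum]
  rw [sum_comm]
  simp [AddChar.sum_mulShift _ (ZMod.isPrimitive_stdAddChar n)]

theorem charSum_mul_charSum_neg (T : Finset (ZMod n)) (h : ZMod n) :
    charSum T h * charSum T (-h) = ∑ x ∈ T ×ˢ T, stdAddChar (h * (x.1 - x.2)) := by
  rw [charSum, charSum, sum_mul_sum, sum_product]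
  refine sum_congr rfl fun k _ => sum_congr rfl fun l _ => ?_
  rw [← AddChar.map_add_eq_mul]
  ring_nf

theorem sum_charSum_mul_charSum_neg (T : Finset (ZMod n)) :
    ∑ h, charSum T h * charSum T (-h) = n * #T := by
  simp_rw [charSum_mul_charSum_neg]
  rw [sum_comm]
  simp [AddChar.sum_mulShift _ (ZMod.isPrimitive_stdAddChar n), sum_product, sub_eq_zero,
    mul_comm]

theorem sum_eq_add_mul_of_forall_ne_zero (f : ZMod n → ℂ) {q : ℂ} (hf : ∀ h ≠ 0, f h = q) :
    ∑ h, f h = f 0 + (n - 1) * q := by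
  rw [← add_sum_erase _ _ (mem_univ 0), sum_congr rfl fun h hh => hf h (ne_of_mem_erase hh),
    sum_const, card_erase_of_mem (mem_univ 0), card_univ, ZMod.card, nsmul_eq_mul,
    Nat.cast_sub NeZero.one_le, Nat.cast_one]

theorem card_eq_zero_or_eq_of_charSum_eq (T : Finset (ZMod n)) (h0 : (0 : ZMod n) ∉ T) {q : ℂ}
    (hq : ∀ h ≠ 0, charSum T h = q) : #T = 0 ∨ #T = n - 1 := by
  have e1 := sum_charSum T
  rw [sum_eq_add_mul_of_forall_ne_zero _ hq, if_neg h0, charSum_zero] at e1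
  have e2 := sum_charSum_mul_charSum_neg T
  rw [sum_eq_add_mul_of_forall_ne_zero _ (q := q * q)
    (fun h hh => by rw [hq h hh, hq (-h) (neg_ne_zero.mpr hh)]), neg_zero, charSum_zero] at e2
  have key : (n : ℂ) * (#T * (#T - (n - 1))) = 0 := by
    linear_combination (n - 1 : ℂ) * e2 + ((#T : ℂ) - (n - 1) * q) * e1
  rcases mul_eq_zero.mp key with hn | hT
  · exact absurd hn (Nat.cast_ne_zero.mpr (NeZero.ne n))
  rcases mul_eq_zero.mp hT with hT | hT
  · exact Or.inl (by exact_mod_cast hT)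
  · right
    rw [sub_eq_zero, ← Nat.cast_one, ← Nat.cast_sub NeZero.one_le] at hT
    exact_mod_cast hT

theorem mem_iff_mem_of_card_eq {α : Type*} [Fintype α] [DecidableEq α] {T : Finset α} {a : α}
    (ha : a ∉ T) (hT : #T = 0 ∨ #T = Fintype.card α - 1) {k l : α} (hk : k ≠ a) (hl : l ≠ a) :
    k ∈ T ↔ l ∈ T := by
  rcases hT with hT | hT
  · simp [card_eq_zero.mp hT]
  · have hsub : T ⊆ univ.erase a := fun x hx => mem_erase.mpr ⟨fun h => ha (h ▸ hx), mem_univ x⟩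
    have : T = univ.erase a := eq_of_subset_of_card_le hsub (by simp [card_erase_of_mem, hT])
    simp [this, hk, hl]

theorem card_eq_of_charSum_mul_charSum_neg_eq {p : ℕ} [NeZero p] (hp : p.Prime)
    (T : Finset (ZMod p)) {m : ℤ} (hm : ∀ h ≠ 0, charSum T h * charSum T (-h) = ((m : ℂ) / 2) ^ 2) :
    #T = 0 ∨ #T = 1 ∨ #T = p - 1 ∨ #T = p := by
  have e := sum_charSum_mul_charSum_neg T
  rw [sum_eq_add_mul_of_forall_ne_zero _ hm, neg_zero, charSum_zero] at e
  have key : (2 * #T - p : ℤ) ^ 2 + (p - 1) * m ^ 2 = p ^ 2 := by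
    have : ((2 * #T - p : ℤ) : ℂ) ^ 2 + (p - 1) * m ^ 2 = p ^ 2 := by
      push_cast
      linear_combination 4 * e
    exact_mod_cast this
  have := hp.one_le
  rcases eq_of_sq_add_mul_sq_eq_sq hp key with h | h | h | h <;> omega

end CharSum

section Galois

theorem IsPrimitiveRoot.aeval_eq_of_aeval_eq {K : Type*} [Field K] [CharZero K] {n : ℕ}
    (hn : 0 < n) {ζ η : K} (hζ : IsPrimitiveRoot ζ n) (hη : IsPrimitiveRoot η n) {F : ℚ[X]}
    {q : ℚ} (h : aeval ζ F = algebraMap ℚ K q) : aeval η F = algebraMap ℚ K q := by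
  obtain ⟨G, hG⟩ := minpoly.dvd ℚ ζ (p := F - C q) (by simp [h])
  have : NeZero (n : K) := ⟨Nat.cast_ne_zero.mpr hn.ne'⟩
  have hroot : aeval η (minpoly ℚ ζ) = 0 := by
    rw [← cyclotomic_eq_minpoly_rat hζ hn, aeval_def, eval₂_eq_eval_map, map_cyclotomic]
    exact isRoot_cyclotomic_iff.mpr hη
  have := congrArg (aeval η) hG
  rw [map_mul, hroot, zero_mul, map_sub, aeval_C, sub_eq_zero] at this
  exact this

variable {p : ℕ} [NeZero p]

theorem isPrimitiveRoot_stdAddChar (hp : p.Prime) {h : ZMod p} (hh : h ≠ 0) :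
    IsPrimitiveRoot (stdAddChar h) p := by
  have := Fact.mk hp
  convert IsPrimitiveRoot.orderOf (stdAddChar h)
  refine (orderOf_eq_prime ?_ ?_).symm
  · rw [← AddChar.map_nsmul_eq_pow, nsmul_eq_mul, ZMod.natCast_self, zero_mul,
      AddChar.map_zero_eq_one]
  · rwa [← AddChar.map_zero_eq_one (stdAddChar (N := p)), ZMod.injective_stdAddChar.ne_iff]

theorem sum_stdAddChar_mul_eq_aeval {ι : Type*} (I : Finset ι) (g : ι → ZMod p) (h : ZMod p) :
    ∑ i ∈ I, stdAddChar (h * g i) = aeval (stdAddChar h) (∑ i ∈ I, (X : ℚ[X]) ^ (g i).val) := by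
  simp [map_sum, ← AddChar.map_nsmul_eq_pow, nsmul_eq_mul, mul_comm]

theorem sum_stdAddChar_mul_eq_of_eq (hp : p.Prime) {ι : Type*} (I : Finset ι) (g : ι → ZMod p)
    {q : ℚ} (hq : ∑ i ∈ I, stdAddChar (g i) = q) {h : ZMod p} (hh : h ≠ 0) :
    ∑ i ∈ I, stdAddChar (h * g i) = q := by
  have h1 : (1 : ZMod p) ≠ 0 := by
    have := Fact.mk hp
    exact one_ne_zero
  rw [sum_stdAddChar_mul_eq_aeval]
  exact (isPrimitiveRoot_stdAddChar hp h1).aeval_eq_of_aeval_eq hp.pos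
    (isPrimitiveRoot_stdAddChar hp hh) (by rw [← sum_stdAddChar_mul_eq_aeval]; simpa using hq)

end Galois

section Necessity

variable {n : ℕ} [NeZero n] {S : Set (DihedralGroup n)}

open scoped Classical in
noncomputable def rIdx (S : Set (DihedralGroup n)) : Finset (ZMod n) := univ.filter (r · ∈ S)

open scoped Classical in
noncomputable def srIdx (S : Set (DihedralGroup n)) : Finset (ZMod n) := univ.filter (sr · ∈ S)

@[simp] theorem mem_rIdx {k : ZMod n} : k ∈ rIdx S ↔ r k ∈ S := by simp [rIdx]

@[simp] theorem mem_srIdx {k : ZMod n} : k ∈ srIdx S ↔ sr k ∈ S := by simp [srIdx]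

theorem sum_indicator_r_mul (F : ZMod n → ℂ) :
    ∑ k, (S.indicator 1 (r k) : ℂ) * F k = ∑ k ∈ rIdx S, F k := by
  classical
  simp [rIdx, sum_filter, Set.indicator_apply]

theorem sum_indicator_sr_mul (F : ZMod n → ℂ) :
    ∑ k, (S.indicator 1 (sr k) : ℂ) * F k = ∑ k ∈ srIdx S, F k := by
  classical
  simp [srIdx, sum_filter, Set.indicator_apply]

theorem charSum_rIdx_neg (hSinv : S⁻¹ = S) (h : ZMod n) :
    charSum (rIdx S) (-h) = charSum (rIdx S) h := by
  refine sum_equiv (Equiv.neg _) (fun k => ?_) (fun k _ => by simp)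
  rw [mem_rIdx, mem_rIdx, Equiv.neg_apply, ← inv_r, ← Set.mem_inv, hSinv]

/-- For fixed `h` these functions span a copy of the representation with character `chi n h`. -/
noncomputable def waveVec (h : ZMod n) (c d : ℂ) : DihedralGroup n → ℂ
  | r j => c * stdAddChar (h * j)
  | sr j => d * stdAddChar (-(h * j))

theorem convMatrix_indicator_mulVec_waveVec (h : ZMod n) (c d : ℂ) :
    convMatrix (S.indicator 1) *ᵥ waveVec h c d =
      waveVec h (c * charSum (rIdx S) h + d * charSum (srIdx S) (-h))
        (d * charSum (rIdx S) (-h) + c * charSum (srIdx S) h) := by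
  funext x
  rw [convMatrix_mulVec, DihedralGroup.sum_univ, sum_indicator_r_mul, sum_indicator_sr_mul]
  rcases x with i | i
  · simp only [waveVec, r_mul_r, r_mul_sr, charSum, mul_sum, sum_mul, add_mul]
    congr 1 <;> refine sum_congr rfl fun k _ => ?_
    · rw [mul_add, AddChar.map_add_eq_mul]; ring
    · rw [show -(h * (k - i)) = -h * k + h * i by ring, AddChar.map_add_eq_mul]; ring
  · simp only [waveVec, sr_mul_r, sr_mul_sr, charSum, mul_sum, sum_mul, add_mul]
    congr 1 <;> refine sum_congr rfl fun k _ => ?_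
    · rw [show -(h * (i + k)) = -h * k + -(h * i) by ring, AddChar.map_add_eq_mul]; ring
    · rw [show h * (k - i) = h * k + -(h * i) by ring, AddChar.map_add_eq_mul]; ring

theorem mem_spectrum_adjMat_of_charSum (h1 : (1 : DihedralGroup n) ∉ S) (hSinv : S⁻¹ = S)
    (h : ZMod n) {c d μ : ℂ} (hcd : c ≠ 0 ∨ d ≠ 0)
    (hr : c * charSum (rIdx S) h + d * charSum (srIdx S) (-h) = μ * c)
    (hsr : d * charSum (rIdx S) (-h) + c * charSum (srIdx S) h = μ * d) :
    μ ∈ spectrum ℂ (adjMat (cayleyGraph S)) := by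
  rw [adjMat_cayleyGraph h1 hSinv]
  refine mem_spectrum_of_mulVec_eq_smul (v := waveVec h c d) ?_ ?_
  · intro hv
    rcases hcd with hc | hd
    · exact hc (by simpa [waveVec] using congrFun hv (r 0))
    · exact hd (by simpa [waveVec] using congrFun hv (sr 0))
  · rw [convMatrix_indicator_mulVec_waveVec, hr, hsr]
    funext x
    cases x <;> simp [waveVec, mul_assoc]

theorem charSum_add_mul_norm_mem_spectrum (h1 : (1 : DihedralGroup n) ∉ S) (hSinv : S⁻¹ = S)
    (h : ZMod n) {σ : ℂ} (hσ : σ ^ 2 = 1) :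
    charSum (rIdx S) h + σ * ‖charSum (srIdx S) h‖ ∈ spectrum ℂ (adjMat (cayleyGraph S)) := by
  set β := charSum (srIdx S) h
  have hβ : β * charSum (srIdx S) (-h) = (‖β‖ : ℂ) ^ 2 := by
    rw [charSum_neg, Complex.mul_conj']
  by_cases hβ0 : β = 0
  · refine mem_spectrum_adjMat_of_charSum h1 hSinv h (c := 1) (d := 0) (Or.inl one_ne_zero) ?_ ?_
    · simp [hβ0]
    · simp [hβ0, β]
  · refine mem_spectrum_adjMat_of_charSum h1 hSinv h (c := σ * ‖β‖) (d := β) (Or.inr hβ0) ?_ ?_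
    · linear_combination hβ - (‖β‖ : ℂ) ^ 2 * hσ
    · rw [charSum_rIdx_neg hSinv]
      ring

end Necessity

section Rationality

variable {p : ℕ} [NeZero p] {S : Set (DihedralGroup p)}

theorem exists_charSum_eq_of_isIntegralGraph (hp : p.Prime) (h1 : (1 : DihedralGroup p) ∉ S)
    (hSinv : S⁻¹ = S) (hI : IsIntegralGraph (cayleyGraph S)) :
    ∃ (q : ℂ) (m : ℤ), ∀ h ≠ 0, charSum (rIdx S) h = q ∧
      charSum (srIdx S) h * charSum (srIdx S) (-h) = ((m : ℂ) / 2) ^ 2 := by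
  obtain ⟨z₁, hz₁⟩ := hI _ (charSum_add_mul_norm_mem_spectrum h1 hSinv 1 (σ := 1) (by norm_num))
  obtain ⟨z₂, hz₂⟩ := hI _ (charSum_add_mul_norm_mem_spectrum h1 hSinv 1 (σ := -1) (by norm_num))
  refine ⟨(((z₁ + z₂ : ℚ) / 2 : ℚ) : ℂ), z₁ - z₂, fun h hh => ⟨?_, ?_⟩⟩
  · refine sum_stdAddChar_mul_eq_of_eq hp (rIdx S) (fun k => k) ?_ hh
    have : charSum (rIdx S) 1 = ((z₁ + z₂ : ℂ)) / 2 := by linear_combination (hz₁ + hz₂) / 2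
    simpa [charSum] using this
  · have hnorm : (‖charSum (srIdx S) 1‖ : ℂ) = (z₁ - z₂) / 2 := by
      linear_combination (hz₁ - hz₂) / 2
    rw [charSum_mul_charSum_neg]
    refine (sum_stdAddChar_mul_eq_of_eq hp (srIdx S ×ˢ srIdx S) (fun x => x.1 - x.2)
      (q := ((z₁ - z₂ : ℚ) / 2) ^ 2) ?_ hh).trans (by push_cast; ring)
    have := charSum_mul_charSum_neg (srIdx S) 1
    rw [charSum_neg, Complex.mul_conj', hnorm] at this
    simpa using this.symm

theorem r_mem_iff_of_isIntegralGraph (hp : p.Prime) (h1 : (1 : DihedralGroup p) ∉ S)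
    (hSinv : S⁻¹ = S) (hI : IsIntegralGraph (cayleyGraph S)) {k : ZMod p} (hk : k ≠ 0) :
    r k ∈ S ↔ r 1 ∈ S := by
  have := Fact.mk hp
  obtain ⟨q, _, hq⟩ := exists_charSum_eq_of_isIntegralGraph hp h1 hSinv hI
  have h0 : (0 : ZMod p) ∉ rIdx S := by simpa using h1
  have hcard := card_eq_zero_or_eq_of_charSum_eq _ h0 fun h hh => (hq h hh).1
  simpa using mem_iff_mem_of_card_eq h0 (by rwa [ZMod.card]) hk one_ne_zero

theorem card_srIdx_of_isIntegralGraph (hp : p.Prime) (h1 : (1 : DihedralGroup p) ∉ S)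
    (hSinv : S⁻¹ = S) (hI : IsIntegralGraph (cayleyGraph S)) :
    #(srIdx S) = 0 ∨ #(srIdx S) = 1 ∨ #(srIdx S) = p - 1 ∨ #(srIdx S) = p := by
  obtain ⟨_, m, hm⟩ := exists_charSum_eq_of_isIntegralGraph hp h1 hSinv hI
  exact card_eq_of_charSum_mul_charSum_neg_eq hp _ fun h hh => (hm h hh).2

end Rationality

section Classification

variable {p : ℕ}

theorem inBooleanAlgebra_iff (hp : p.Prime) {S₁ : Set (DihedralGroup p)} (hS₁ : S₁ ⊆ rSet p) :
    InBooleanAlgebra p S₁ ↔ ∀ k ≠ 0, (r k ∈ S₁ ↔ r 1 ∈ S₁) := by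
  have := Fact.mk hp
  have hgcd : ∀ k : ZMod p, k ≠ 0 → Nat.gcd k.val p = 1 := fun k hk =>
    ZMod.val_coe_unit_coprime (Units.mk0 k hk)
  have hgcd0 : Nat.gcd (0 : ZMod p).val p ≠ 1 := by simpa using hp.one_lt.ne'
  refine ⟨fun h k hk => h.2 k 1 (by rw [hgcd k hk, hgcd 1 one_ne_zero]), fun h => ⟨hS₁, ?_⟩⟩
  intro k l hkl
  by_cases hk : k = 0 <;> by_cases hl : l = 0
  · rw [hk, hl]
  · rw [hk, hgcd l hl] at hkl; exact absurd hkl hgcd0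
  · rw [hl, hgcd k hk] at hkl; exact absurd hkl.symm hgcd0
  · exact (h k hk).trans (h l hl).symm

theorem srSet_eq_range : srSet p = Set.range sr := by
  ext
  simp [srSet, eq_comm]

theorem eq_image_sr_srIdx [NeZero p] {S₂ : Set (DihedralGroup p)} (hS₂ : S₂ ⊆ srSet p) :
    S₂ = sr '' (srIdx S₂ : Set (ZMod p)) := by
  ext x
  refine ⟨fun hx => ?_, ?_⟩
  · obtain ⟨k, rfl⟩ := hS₂ hx
    exact ⟨k, by simpa using hx, rfl⟩
  · rintro ⟨k, hk, rfl⟩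
    simpa using hk

theorem srSet_shape_of_card [NeZero p] {S₂ : Set (DihedralGroup p)} (hS₂ : S₂ ⊆ srSet p)
    (hcard : #(srIdx S₂) = 0 ∨ #(srIdx S₂) = 1 ∨ #(srIdx S₂) = p - 1 ∨ #(srIdx S₂) = p) :
    (∃ k, S₂ = srSet p \ {sr k}) ∨ S₂ = srSet p ∨ (∃ k, S₂ = {sr k}) ∨ S₂ = ∅ := by
  classical
  rw [eq_image_sr_srIdx hS₂, srSet_eq_range]
  rcases hcard with h | h | h | h
  · simp [card_eq_zero.mp h]
  · obtain ⟨k, hk⟩ := card_eq_one.mp h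
    simp [hk]
  · have hc : #(srIdx S₂)ᶜ = 1 := by
      rw [card_compl, ZMod.card, h, Nat.sub_sub_self NeZero.one_le]
    obtain ⟨k, hk⟩ := card_eq_one.mp hc
    refine Or.inl ⟨k, ?_⟩
    rw [← compl_compl (srIdx S₂), hk, coe_compl, coe_singleton,
      Set.image_compl_eq_range_sdiff_image (fun _ _ h => sr.inj h), Set.image_singleton]
  · simp [eq_univ_of_card _ (h.trans (ZMod.card p).symm)]

theorem exists_indicator_sr_eq {S₂ : Set (DihedralGroup p)}
    (h : (∃ k, S₂ = srSet p \ {sr k}) ∨ S₂ = srSet p ∨ (∃ k, S₂ = {sr k}) ∨ S₂ = ∅) :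
    ∃ (w s : ℤ) (c : ZMod p),
      ∀ k, (S₂.indicator 1 (sr k) : ℂ) = w + s * (Pi.single c 1 : ZMod p → ℂ) k := by
  classical
  rcases h with ⟨c, rfl⟩ | rfl | ⟨c, rfl⟩ | rfl
  · refine ⟨1, -1, c, fun k => ?_⟩
    rcases eq_or_ne k c with rfl | hk <;> simp [srSet, *]
  · exact ⟨1, 0, 0, fun k => by simp [srSet]⟩
  · refine ⟨0, 1, c, fun k => ?_⟩
    rcases eq_or_ne k c with rfl | hk <;> simp [*]
  · exact ⟨0, 0, 0, fun k => by simp⟩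

end Classification

theorem stmt4_general (p : ℕ) (hp : p.Prime) [NeZero p]
    (S S₁ S₂ : Set (DihedralGroup p)) (hS : S = S₁ ∪ S₂)
    (h1 : (1 : DihedralGroup p) ∉ S) (hSinv : S⁻¹ = S)
    (hS₁ : S₁ ⊆ rSet p) (hS₂ : S₂ ⊆ srSet p) :
    IsIntegralGraph (cayleyGraph S) ↔
      (InBooleanAlgebra p S₁ ∧
        ((∃ k : ZMod p, S₂ = srSet p \ {DihedralGroup.sr k}) ∨
          S₂ = srSet p ∨
          (∃ k : ZMod p, S₂ = {DihedralGroup.sr k}) ∨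
          S₂ = ∅)) := by
  have hr : ∀ k, r k ∈ S ↔ r k ∈ S₁ := fun k => by
    rw [hS, Set.mem_union, or_iff_left fun h => by simpa [srSet] using hS₂ h]
  have hsr : ∀ k, sr k ∈ S ↔ sr k ∈ S₂ := fun k => by
    rw [hS, Set.mem_union, or_iff_right fun h => by simpa [rSet] using hS₁ h]
  rw [inBooleanAlgebra_iff hp hS₁]
  simp only [← hr]
  constructor
  · intro hI
    have hsrIdx : srIdx S₂ = srIdx S := by ext; simp [hsr]
    refine ⟨fun k hk => r_mem_iff_of_isIntegralGraph hp h1 hSinv hI hk,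
      srSet_shape_of_card hS₂ (hsrIdx ▸ card_srIdx_of_isIntegralGraph hp h1 hSinv hI)⟩
  · classical
    rintro ⟨hrot, hshape⟩
    obtain ⟨w, s, c, hw⟩ := exists_indicator_sr_eq hshape
    refine isIntegralGraph_cayleyGraph_of_indicator h1 hSinv (if r 1 ∈ S then 1 else 0) w s c
      (fun k hk => ?_) (fun k => ?_)
    · by_cases h : r 1 ∈ S <;> simp [hrot k hk, h]
    · rw [← hw k]
      simp [Set.indicator_apply, hsr k]

/-- Theorem 4.3. For an odd prime `p`, `X(D_p,S)` is integral iff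
`S₁ ∈ B(⟨a⟩)` and `S₂` is `b⟨a⟩∖{ba^k}`, the full coset `b⟨a⟩`, a singleton `{ba^k}`,
or the empty set. -/
theorem stmt4 (p : ℕ) (hp : p.Prime) (hodd : Odd p) [NeZero p]
    (S S₁ S₂ : Set (DihedralGroup p)) (hS : S = S₁ ∪ S₂)
    (h1 : (1 : DihedralGroup p) ∉ S) (hSinv : S⁻¹ = S)
    (hS₁ : S₁ ⊆ rSet p) (hS₂ : S₂ ⊆ srSet p) :
    IsIntegralGraph (cayleyGraph S) ↔
      (InBooleanAlgebra p S₁ ∧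
        ((∃ k : ZMod p, S₂ = srSet p \ {DihedralGroup.sr k}) ∨
          S₂ = srSet p ∨
          (∃ k : ZMod p, S₂ = {DihedralGroup.sr k}) ∨
          S₂ = ∅)) :=
  stmt4_general p hp S S₁ S₂ hS h1 hSinv hS₁ hS₂
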